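/- arXiv:math/0003161 — 2 statements merged into one kernel-verified Lean document; each statement's English description precedes it below -/
import Mathlib

section
/- Fix integers n ≥ 1 and l ≥ 1, and for k ∈ ℤ let i_k be the unique element of {0,1,…,n} with i_k ≡ −k (mod n+1). Then for every u ∈ B_l, ẽ^max_{i_n}(ẽ^max_{i_{n−1}}(⋯(ẽ^max_{i_1} u)⋯)) = (l, 0, …, 0), i.e. applying ẽ^max_n, then ẽ^max_{n−1}, …, then ẽ^max_1 to any element of B_l yields the element with first coordinate l and all other coordinates 0. -/
/-- Iterated application of a partial map: `OptIter g m a` is `g^m a`. -/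
def OptIter {α : Type} (g : α → Option α) : ℕ → α → Option α
  | 0, a => some a
  | m + 1, a => (g a).bind (OptIter g m)

/-- Apply the partial maps `g 1`, `g 2`, ..., `g m` in this order. -/
def ChainOpt {α : Type} (g : ℕ → α → Option α) (m : ℕ) (a : α) : Option α :=
  (List.range m).foldl (fun acc j => acc.bind (g (j + 1))) (some a)

/-- A set with partial Kashiwara-type operators indexed by `{0, 1, ..., n}`. -/
structure PreCrystal (n : ℕ) where
  carrier : Type
  e : Fin (n + 1) → carrier → Option carrier
  f : Fin (n + 1) → carrier → Option carrier

namespace PreCrystal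

variable {n : ℕ}

/-- `ε_i(b) = max {m ≥ 0 : ẽ_i^m b is defined}`. -/
noncomputable def eps (C : PreCrystal n) (i : Fin (n + 1)) (b : C.carrier) : ℕ :=
  sSup {m | OptIter (C.e i) m b ≠ none}

/-- `φ_i(b) = max {m ≥ 0 : f̃_i^m b is defined}`. -/
noncomputable def phi (C : PreCrystal n) (i : Fin (n + 1)) (b : C.carrier) : ℕ :=
  sSup {m | OptIter (C.f i) m b ≠ none}

/-- `ẽ_i^max b = ẽ_i^{ε_i(b)} b`. -/
noncomputable def eMax (C : PreCrystal n) (i : Fin (n + 1)) (b : C.carrier) : Option C.carrier :=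
  OptIter (C.e i) (C.eps i b) b

/-- The Weyl group operator `S_i`: `f̃_i^{φ_i(b)-ε_i(b)} b` if `φ_i(b) ≥ ε_i(b)`,
and `ẽ_i^{ε_i(b)-φ_i(b)} b` if `φ_i(b) ≤ ε_i(b)`. -/
noncomputable def S (C : PreCrystal n) (i : Fin (n + 1)) (b : C.carrier) : Option C.carrier :=
  if C.eps i b ≤ C.phi i b then OptIter (C.f i) (C.phi i b - C.eps i b) b
  else OptIter (C.e i) (C.eps i b - C.phi i b) b

/-- The tensor product `C ⊗ D` of two crystals, with the Kashiwara tensor product rule. -/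
noncomputable def tensor (C D : PreCrystal n) : PreCrystal n where
  carrier := C.carrier × D.carrier
  e := fun i p =>
    if D.eps i p.2 ≤ C.phi i p.1 then (C.e i p.1).map (fun b => (b, p.2))
    else (D.e i p.2).map (fun b => (p.1, b))
  f := fun i p =>
    if D.eps i p.2 < C.phi i p.1 then (C.f i p.1).map (fun b => (b, p.2))
    else (D.f i p.2).map (fun b => (p.1, b))

end PreCrystal

/-- Kashiwara raising operator `ẽ_i` of type `A_n^{(1)}` on `(n+1)`-tuples of
nonnegative integers (zero-indexed: coordinate `j` is `x_{j+1}`): defined iff the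
coordinate at index `i` is positive, it adds 1 at index `i-1` (cyclically) and
subtracts 1 at index `i`. -/
def eA (n : ℕ) (i : Fin (n + 1)) (x : Fin (n + 1) → ℕ) : Option (Fin (n + 1) → ℕ) :=
  if 0 < x i then
    some (Function.update (Function.update x (i - 1) (x (i - 1) + 1)) i (x i - 1))
  else none

/-- Kashiwara lowering operator `f̃_i` of type `A_n^{(1)}`: defined iff the coordinate
at index `i-1` is positive, it subtracts 1 at index `i-1` and adds 1 at index `i`. -/
def fA (n : ℕ) (i : Fin (n + 1)) (x : Fin (n + 1) → ℕ) : Option (Fin (n + 1) → ℕ) :=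
  if 0 < x (i - 1) then
    some (Function.update (Function.update x i (x i + 1)) (i - 1) (x (i - 1) - 1))
  else none

/-- The crystal operators of type `A_n^{(1)}` on all `(n+1)`-tuples; the crystal `B_l`
is the subset of tuples with coordinate sum `l`. -/
def BA (n : ℕ) : PreCrystal n where
  carrier := Fin (n + 1) → ℕ
  e := eA n
  f := fA n

/-- The unique element of `{0, ..., n}` congruent to `-k` modulo `n+1`. -/
def negIdx (n : ℕ) (k : ℤ) : Fin (n + 1) :=
  ⟨((-k) % ((n : ℤ) + 1)).toNat, by
    have h1 := Int.emod_nonneg (-k) (by omega : ((n : ℤ) + 1) ≠ 0)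
    have h2 := Int.emod_lt_of_pos (-k) (by omega : (0 : ℤ) < (n : ℤ) + 1)
    omega⟩

/-- The cyclic shift `σ : (x_1, ..., x_{n+1}) ↦ (x_2, ..., x_{n+1}, x_1)`. -/
def shiftA (n : ℕ) (x : Fin (n + 1) → ℕ) : Fin (n + 1) → ℕ := fun j => x (j + 1)

/-- The map `t(x_1, ..., x_{n+1}) = (x_n, x_{n-1}, ..., x_1)`. -/
def tA (n : ℕ) (x : Fin (n + 1) → ℕ) : Fin n → ℕ :=
  fun k => x ⟨n - 1 - (k : ℕ), by omega⟩

/-- The `(N+1)`-fold tensor power `B ⊗ ... ⊗ B`, associated to the left. -/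
noncomputable def BPow (n : ℕ) : ℕ → PreCrystal n
  | 0 => BA n
  | N + 1 => (BPow n N).tensor (BA n)

/-- The element `b_1 ⊗ ... ⊗ b_{N+1}` of the `(N+1)`-fold tensor power. -/
noncomputable def tensorOf (n : ℕ) : (N : ℕ) → (Fin (N + 1) → (Fin (n + 1) → ℕ)) → (BPow n N).carrier
  | 0, b => b 0
  | N + 1, b => (tensorOf n N (fun j => b j.castSucc), b (Fin.last (N + 1)))

/-- Membership in `B_{l_1} ⊗ ... ⊗ B_{l_{N+1}}`: each factor has coordinate sum `l_j`. -/
def memBPow (n : ℕ) : (N : ℕ) → (Fin (N + 1) → ℕ) → (BPow n N).carrier → Prop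
  | 0, l, x => ∑ j, x j = l 0
  | N + 1, l, p => memBPow n N (fun j => l j.castSucc) p.1 ∧ ∑ j, p.2 j = l (Fin.last (N + 1))

/-- The componentwise cyclic shift `σ_B = σ ⊗ ... ⊗ σ` on a tensor power. -/
noncomputable def shiftPow (n : ℕ) : (N : ℕ) → (BPow n N).carrier → (BPow n N).carrier
  | 0, x => shiftA n x
  | N + 1, p => (shiftPow n N p.1, shiftA n p.2)

/-! On `B_l` the operator `ẽ_i^max` empties coordinate `i` into coordinate `i - 1` (indices
starting at `0`), keeping the total `l`. Applying it at `i = n, n - 1, …, 1` therefore sweeps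
everything down to coordinate `0`: after `j` steps all coordinates above `n - j` vanish. -/

theorem sum_update_update_zero {ι M : Type*} [Fintype ι] [DecidableEq ι] [AddCommMonoid M]
    (x : ι → M) {a b : ι} (hab : a ≠ b) :
    ∑ m, Function.update (Function.update x a (x a + x b)) b 0 m = ∑ m, x m := by
  rw [Finset.sum_update_of_mem (Finset.mem_univ b), Finset.sum_update_of_mem (by simpa using hab),
    zero_add, ← Finset.add_sum_erase _ _ (Finset.mem_univ b),
    ← Finset.add_sum_erase _ _ (by simpa using hab : a ∈ Finset.univ.erase b)]
  simp only [Finset.sdiff_singleton_eq_erase]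
  abel

theorem chainOpt_succ {α : Type} (g : ℕ → α → Option α) (m : ℕ) (a : α) :
    ChainOpt g (m + 1) a = (ChainOpt g m a).bind (g (m + 1)) := by
  simp [ChainOpt, List.range_succ]

theorem negIdx_natCast_succ_val {n j : ℕ} (hj : j ≤ n) :
    (negIdx n ((j + 1 : ℕ) : ℤ)).val = n - j := by
  have hmod : (-((j + 1 : ℕ) : ℤ)) % ((n : ℤ) + 1) = ((n - j : ℕ) : ℤ) := by
    rw [show -((j + 1 : ℕ) : ℤ) = ((n - j : ℕ) : ℤ) + ((n : ℤ) + 1) * (-1) by push_cast [hj]; ring,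
      Int.add_mul_emod_self_left, Int.emod_eq_of_lt (by omega) (by omega)]
  simp only [negIdx, hmod, Int.toNat_natCast]

section BA

variable {n : ℕ}

theorem optIter_eA_ne_none_iff (i : Fin (n + 1)) (m : ℕ) (x : Fin (n + 1) → ℕ) :
    OptIter (eA n i) m x ≠ none ↔ m ≤ x i := by
  induction m generalizing x with
  | zero => simp [OptIter]
  | succ m ih =>
    by_cases hx : 0 < x i
    · simp only [OptIter, eA, if_pos hx, Option.bind_some, ih, Function.update_self]
      omega
    · simp only [OptIter, eA, if_neg hx, Option.bind_none, ne_eq, not_true_eq_false, false_iff]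
      omega

theorem eps_BA (i : Fin (n + 1)) (x : Fin (n + 1) → ℕ) : (BA n).eps i x = x i := by
  have hdef : {m | OptIter ((BA n).e i) m x ≠ none} = Set.Iic (x i) := by
    ext m
    exact optIter_eA_ne_none_iff i m x
  unfold PreCrystal.eps
  rw [hdef, csSup_Iic]

theorem optIter_eA_of_le {i : Fin (n + 1)} (hi : i ≠ 0) {m : ℕ} {x : Fin (n + 1) → ℕ}
    (hm : m ≤ x i) :
    OptIter (eA n i) m x
      = some (Function.update (Function.update x (i - 1) (x (i - 1) + m)) i (x i - m)) := by
  have hne : i - 1 ≠ i := (Fin.sub_one_lt_iff.mpr (Fin.pos_iff_ne_zero.mpr hi)).ne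
  induction m generalizing x with
  | zero => simp [OptIter]
  | succ m ih =>
    have hx : 0 < x i := by omega
    simp only [OptIter, eA, if_pos hx, Option.bind_some]
    rw [ih (by simp; omega)]
    congr 1
    funext j
    simp only [Function.update_apply]
    split_ifs <;> simp_all <;> omega

theorem eMax_BA {i : Fin (n + 1)} (hi : i ≠ 0) (x : Fin (n + 1) → ℕ) :
    (BA n).eMax i x
      = some (Function.update (Function.update x (i - 1) (x (i - 1) + x i)) i 0) := by
  unfold PreCrystal.eMax
  have h := optIter_eA_of_le hi (le_refl (x i))
  rw [Nat.sub_self] at h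
  rw [eps_BA]
  exact h

end BA

theorem chainOpt_eMax_negIdx {n : ℕ} (u : Fin (n + 1) → ℕ) {j : ℕ} (hj : j ≤ n) :
    ∃ x : Fin (n + 1) → ℕ, ChainOpt (fun k => (BA n).eMax (negIdx n k)) j u = some x ∧
      (∀ m : Fin (n + 1), n - j < m.val → x m = 0) ∧ ∑ m, x m = ∑ m, u m := by
  induction j with
  | zero => exact ⟨u, rfl, fun m hm => absurd m.isLt (by omega), rfl⟩
  | succ j ih =>
    obtain ⟨x, hchain, hzero, hsum⟩ := ih (by omega)
    set i := negIdx n ((j + 1 : ℕ) : ℤ)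
    have hi : i.val = n - j := negIdx_natCast_succ_val (by omega)
    have hi0 : i ≠ 0 := fun h => by rw [h, Fin.val_zero] at hi; omega
    have hi1 : (i - 1).val = n - j - 1 := by rw [Fin.coe_sub_one, if_neg hi0, hi]
    -- `(BA n).carrier` is `Fin (n + 1) → ℕ` only after unfolding `BA`, hence the explicit `α`.
    refine ⟨_, (chainOpt_succ (α := (BA n).carrier) _ j u).trans
      (by rw [hchain]; exact eMax_BA hi0 x), ?_, ?_⟩
    · intro m hm
      have hmi1 : m ≠ i - 1 := fun h => by rw [h, hi1] at hm; omega
      by_cases hmi : m = i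
      · simp [hmi]
      · rw [Function.update_of_ne hmi, Function.update_of_ne hmi1]
        exact hzero m (by rw [← hi]; exact lt_of_le_of_ne (by omega) (Fin.val_ne_of_ne hmi).symm)
    · rw [sum_update_update_zero x (fun h => by rw [h, hi] at hi1; omega), hsum]

theorem stmt8_general (n l : ℕ) (u : Fin (n + 1) → ℕ)
    (hu : ∑ j, u j = l) :
    ChainOpt (fun k => (BA n).eMax (negIdx n k)) n u
      = some (fun j => if j = (0 : Fin (n + 1)) then l else 0) := by
  obtain ⟨x, hchain, hzero, hsum⟩ := chainOpt_eMax_negIdx u (le_refl n)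
  have hzero' : ∀ m ≠ 0, x m = 0 := fun m hm =>
    hzero m (by rw [Nat.sub_self]; exact Nat.pos_of_ne_zero (Fin.val_ne_of_ne hm))
  rw [hchain, ← hu, ← hsum, Fintype.sum_eq_single 0 hzero']
  congr 1
  funext m
  split_ifs with hm
  · rw [hm]
  · exact hzero' m hm

/-- Equation (2.10) for type `A_n^{(1)}`: with `i_k ≡ -k (mod n+1)`, applying
`ẽ^max_{i_1} = ẽ^max_n`, then `ẽ^max_{i_2} = ẽ^max_{n-1}`, …, then `ẽ^max_{i_n} = ẽ^max_1`
to any `u ∈ B_l` yields `δ_l[1] = (l, 0, …, 0)`. -/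
theorem stmt8 (n l : ℕ) (hn : 1 ≤ n) (hl : 1 ≤ l) (u : Fin (n + 1) → ℕ)
    (hu : ∑ j, u j = l) :
    ChainOpt (fun k => (BA n).eMax (negIdx n k)) n u
      = some (fun j => if j = (0 : Fin (n + 1)) then l else 0) :=
  stmt8_general n l u hu
end

section
/- Fix integers n ≥ 1 and l ≥ 1, and for k ∈ ℤ let i_k be the unique element of {0,1,…,n} with i_k ≡ −k (mod n+1). For 1 ≤ k ≤ n define t_k(b) = φ_{i_k}(ẽ^max_{i_{k−1}}⋯ẽ^max_{i_1} b) (for k = 1 this is φ_{i_1}(b)). Then for every b = (x_1,…,x_{n+1}) ∈ B_l one has (t_1(b), t_2(b), …, t_n(b)) = (x_n, x_{n−1}, …, x_1). -/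
/-!
On `(n+1)`-tuples, `ẽ_i` and `f̃_i` move single units between the cyclically adjacent
coordinates `i` and `i - 1`, so `φ_i(x) = x_{i-1}` and `ẽ^max_i` empties coordinate `i` into
coordinate `i - 1`. As `i_j = n + 1 - j` (zero-indexed), the `j`-th operator of
`ẽ^max_{i_{k-1}} ⋯ ẽ^max_{i_1}` touches only coordinates `n - j` and `n + 1 - j`; hence
coordinate `i_k - 1 = n - k`, which `φ_{i_k}` reads, still carries its original value.
-/

open Function

section Transfer

variable {ι : Type} [DecidableEq ι]

/-- `eA n i = transfer i (i - 1)` and `fA n i = transfer (i - 1) i` hold by definition. -/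
def transfer (s d : ι) (x : ι → ℕ) : Option (ι → ℕ) :=
  if 0 < x s then some (update (update x d (x d + 1)) s (x s - 1)) else none

theorem optIter_transfer {s d : ι} (hsd : s ≠ d) (m : ℕ) (x : ι → ℕ) :
    OptIter (transfer s d) m x =
      if m ≤ x s then some (update (update x d (x d + m)) s (x s - m)) else none := by
  induction m generalizing x with
  | zero => simp [OptIter]
  | succ m ih =>
    by_cases hx : 0 < x s
    · simp only [OptIter, transfer, if_pos hx, Option.bind_some, ih]
      simp only [update_self, update_of_ne hsd.symm]
      by_cases hm : m + 1 ≤ x s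
      · rw [if_pos (by omega), if_pos hm]
        congr 1
        funext j
        simp only [update_apply]
        split_ifs <;> omega
      · rw [if_neg (by omega), if_neg hm]
    · rw [OptIter, transfer, if_neg hx, Option.bind_none, if_neg (by omega)]

theorem sSup_optIter_transfer_ne_none {s d : ι} (hsd : s ≠ d) (x : ι → ℕ) :
    sSup {m | OptIter (transfer s d) m x ≠ none} = x s := by
  have hIic : {m | OptIter (transfer s d) m x ≠ none} = Set.Iic (x s) := by
    ext m
    simp [optIter_transfer hsd]
  rw [hIic, csSup_Iic]

end Transfer

theorem Fin.sub_one_ne_self {n : ℕ} (hn : n ≠ 0) (i : Fin (n + 1)) : i - 1 ≠ i := by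
  rw [Ne, sub_eq_self]
  exact fun h => hn (by simpa using Fin.one_eq_zero_iff.mp h)

section TypeA

variable {n : ℕ}

theorem BA_phi (hn : n ≠ 0) (i : Fin (n + 1)) (x : Fin (n + 1) → ℕ) :
    (BA n).phi i x = x (i - 1) :=
  sSup_optIter_transfer_ne_none (Fin.sub_one_ne_self hn i) x

theorem BA_eMax (hn : n ≠ 0) (i : Fin (n + 1)) (x : Fin (n + 1) → ℕ) :
    (BA n).eMax i x = some (update (update x (i - 1) (x (i - 1) + x i)) i 0) := by
  have hi := (Fin.sub_one_ne_self hn i).symm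
  have heps : (BA n).eps i x = x i := sSup_optIter_transfer_ne_none hi x
  simp only [PreCrystal.eMax, heps]
  exact (optIter_transfer hi (x i) x).trans (by simp)

theorem negIdx_val {k : ℕ} (hk1 : 1 ≤ k) (hk2 : k ≤ n) : (negIdx n k : ℕ) = n + 1 - k := by
  have hmod : (-(k : ℤ)) % ((n : ℤ) + 1) = (n : ℤ) + 1 - k := by
    rw [show -(k : ℤ) = ((n : ℤ) + 1 - k) + ((n : ℤ) + 1) * (-1) by ring,
      Int.add_mul_emod_self_left, Int.emod_eq_of_lt (by omega) (by omega)]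
  simp only [negIdx, hmod]
  omega

theorem negIdx_sub_one_val {k : ℕ} (hk1 : 1 ≤ k) (hk2 : k ≤ n) :
    ((negIdx n k - 1 : Fin (n + 1)) : ℕ) = n - k := by
  have hval := negIdx_val hk1 hk2
  rw [Fin.val_sub_one_of_ne_zero (by rw [Ne, Fin.ext_iff, hval, Fin.val_zero]; omega), hval]
  omega

theorem exists_chainOpt_BA_eMax_eq (b : Fin (n + 1) → ℕ) {m : ℕ} (hm : m < n) :
    ∃ c : Fin (n + 1) → ℕ, ChainOpt (fun j => (BA n).eMax (negIdx n j)) m b = some c ∧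
      ∀ j : Fin (n + 1), (j : ℕ) + m < n → c j = b j := by
  induction m with
  | zero => exact ⟨b, rfl, fun _ _ => rfl⟩
  | succ m ih =>
    obtain ⟨c, hc, hcb⟩ := ih (by omega)
    set i := negIdx n ((m + 1 : ℕ) : ℤ)
    have hi : (i : ℕ) = n - m := by rw [negIdx_val (k := m + 1) (by omega) (by omega)]; omega
    have hi1 : ((i - 1 : Fin (n + 1)) : ℕ) = n - (m + 1) :=
      negIdx_sub_one_val (by omega) (by omega)
    refine ⟨update (update c (i - 1) (c (i - 1) + c i)) i 0, ?_, fun j hj => ?_⟩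
    · simp only [ChainOpt, List.range_succ, List.foldl_append] at hc ⊢
      rw [hc]
      exact BA_eMax (by omega) i c
    · rw [update_of_ne (by rw [Ne, Fin.ext_iff]; omega),
        update_of_ne (by rw [Ne, Fin.ext_iff]; omega), hcb j (by omega)]

end TypeA

/-- Lemma 3.1 for type `A_n^{(1)}`: with `i_k ≡ -k (mod n+1)` and
`t_k(b) = φ_{i_k}(ẽ^max_{i_{k-1}} ⋯ ẽ^max_{i_1} b)`, for every `b = (x_1,…,x_{n+1}) ∈ B_l`
and `1 ≤ k ≤ n` one has `t_k(b) = x_{n+1-k}` (zero-indexed: coordinate `n - k`). -/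
theorem stmt9 (n : ℕ) (b : Fin (n + 1) → ℕ) (k : ℕ) (hk1 : 1 ≤ k) (hk2 : k ≤ n) :
    ∃ c : Fin (n + 1) → ℕ,
      ChainOpt (fun j => (BA n).eMax (negIdx n j)) (k - 1) b = some c ∧
      (BA n).phi (negIdx n k) c = b ⟨n - k, by omega⟩ := by
  obtain ⟨c, hc, hcb⟩ := exists_chainOpt_BA_eMax_eq b (m := k - 1) (by omega)
  have hidx : negIdx n k - 1 = ⟨n - k, by omega⟩ := Fin.ext (negIdx_sub_one_val hk1 hk2)
  refine ⟨c, hc, ?_⟩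
  rw [BA_phi (by omega), hidx, hcb _ (by simp only; omega)]
end
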